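/- Let K be a finite field, s an invertible exponent over K, and τ the restriction to the Weil value set W_{K,s} = {W_u : u ∈ K^×} of the generator σ of Gal(Q(ζ_p)/Q). Then τ is a single cycle on W_{K,s} if and only if K = F_2. -/

import Mathlib

/-!
Write `c = γ b` with `b ^ s = γ⁻¹` in `Kˣ`; the substitution `x ↦ b x` in the Weil sum gives
`σ (W u) = W (c u)`. If `σ` permutes the values `W u` (`u ∈ Kˣ`) transitively and `c ^ e = 1`,
the orbit sum `S = ∑_{j<e} W (c ^ j)` is `σ`-invariant, hence a rational integer because `σ`
generates `Gal(ℚ(ζ)/ℚ)`, and every coset sum `∑_{j<e} W (c ^ j u)` equals `S`. Summing over `u`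
and using `∑_{u ∈ Kˣ} W u = q` gives `(q - 1) S = e q`, so `q - 1 ∣ e`. As `γ ^ (p - 1) = 1` one
may take `e = p - 1`, and for odd `p` (where `s` is odd) even `e = (p - 1) / 2`; either way
`q = 2`.
-/

open Finset

section TraceChar

variable {p : ℕ} [NeZero p] (K : Type*) [Field K] [Algebra (ZMod p) K] {L : Type*} [CommRing L]
  {ζ : L}

noncomputable def traceChar (hζ : ζ ^ p = 1) : AddChar K L :=
  (AddChar.zmodChar p hζ).compAddMonoidHom (Algebra.trace (ZMod p) K).toAddMonoidHom

variable {K}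

theorem traceChar_apply (hζ : ζ ^ p = 1) (x : K) :
    traceChar K hζ x = ζ ^ (Algebra.trace (ZMod p) K x).val :=
  rfl

theorem traceChar_ne_one [Fact p.Prime] [Finite K] (hζ : IsPrimitiveRoot ζ p) :
    traceChar K hζ.pow_eq_one ≠ 1 := by
  obtain ⟨a, ha⟩ := Algebra.trace_surjective (ZMod p) K 1
  refine AddChar.ne_one_iff.2 ⟨a, ?_⟩
  rw [traceChar_apply, ha, ZMod.val_one]
  exact hζ.pow_ne_one_of_pos_of_lt one_ne_zero (Fact.out : p.Prime).one_lt

theorem map_traceChar {F : Type*} [FunLike F L L] [MonoidHomClass F L L] {σ : F} {a : ZMod p}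
    (hσ : σ ζ = ζ ^ a.val) (hζ : ζ ^ p = 1) (x : K) :
    σ (traceChar K hζ x) = traceChar K hζ (algebraMap (ZMod p) K a * x) := by
  rw [traceChar_apply, traceChar_apply, map_pow, hσ, ← pow_mul, ← Algebra.smul_def, map_smul,
    smul_eq_mul, ZMod.val_mul, ← pow_eq_pow_mod _ hζ]

theorem isIntegral_traceChar (hζ : ζ ^ p = 1) (x : K) : IsIntegral ℤ (traceChar K hζ x) :=
  (IsIntegral.of_pow (NeZero.pos p) (hζ ▸ isIntegral_one)).pow _

end TraceChar

theorem bijective_pow_of_coprime {F : Type*} [Field F] [Finite F] {s : ℕ} (hs : s ≠ 0)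
    (hcop : (Nat.card Fˣ).Coprime s) : Function.Bijective fun x : F => x ^ s := by
  refine Finite.injective_iff_bijective.mp fun x y hxy => ?_
  obtain rfl | hx := eq_or_ne x 0
  · exact ((pow_eq_zero_iff hs).mp (hxy.symm.trans (zero_pow hs))).symm
  obtain rfl | hy := eq_or_ne y 0
  · exact (pow_eq_zero_iff hs).mp (hxy.trans (zero_pow hs))
  have := hcop.pow_left_bijective.injective (a₁ := Units.mk0 x hx) (a₂ := Units.mk0 y hy)
    (Units.ext hxy)
  exact congrArg Units.val this

theorem sum_units_add_eq_sum {F M : Type*} [Field F] [Fintype F] [DecidableEq F]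
    [AddCommMonoid M] (f : F → M) : ∑ u : Fˣ, f u + f 0 = ∑ x, f x := by
  rw [← sum_erase_add _ _ (mem_univ (0 : F)),
    sum_subtype (univ.erase (0 : F)) (p := (· ≠ 0)) (by simp)]
  exact congrArg (· + f 0) (Fintype.sum_equiv unitsEquivNeZero _ _ fun _ => rfl)

section WeilSum

variable {F R : Type*} [Field F] [Fintype F] [CommRing R]

def weilSum (ψ : AddChar F R) (s : ℕ) (u : F) : R :=
  ∑ x, ψ (x ^ s - u * x)

theorem weilSum_mulShift (ψ : AddChar F R) {s : ℕ} {g b : F} (hb : b ≠ 0) (hgb : g * b ^ s = 1)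
    (u : F) : weilSum (ψ.mulShift g) s u = weilSum ψ s (g * b * u) := by
  refine (Fintype.sum_equiv (Equiv.mulLeft₀ b hb) _ _ fun y => ?_).symm
  simp only [AddChar.mulShift_apply, Equiv.mulLeft₀_apply]
  congr 1
  linear_combination -(y ^ s) * hgb

variable [IsDomain R] {ψ : AddChar F R} {s : ℕ}

theorem weilSum_zero (hψ : ψ ≠ 1) (hs : Function.Bijective fun x : F => x ^ s) :
    weilSum ψ s 0 = 0 := by
  simp only [weilSum, zero_mul, sub_zero]
  rw [← AddChar.sum_eq_zero_of_ne_one hψ]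
  exact Fintype.sum_bijective _ hs _ _ fun _ => rfl

theorem sum_weilSum [DecidableEq F] (hψ : ψ ≠ 1) (hs : s ≠ 0) :
    ∑ u, weilSum ψ s u = Fintype.card F := by
  unfold weilSum
  rw [sum_comm]
  simp_rw [sub_eq_add_neg, AddChar.map_add_eq_mul, ← mul_sum, ← mul_neg,
    AddChar.sum_mulShift _ (AddChar.IsPrimitive.of_ne_one hψ)]
  simp [zero_pow hs]

theorem sum_units_weilSum [DecidableEq F] (hψ : ψ ≠ 1) (hs : s ≠ 0)
    (hbij : Function.Bijective fun x : F => x ^ s) :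
    ∑ u : Fˣ, weilSum ψ s u = Fintype.card F := by
  rw [← sum_weilSum hψ hs, ← sum_units_add_eq_sum (weilSum ψ s), weilSum_zero hψ hbij,
    add_zero]

end WeilSum

theorem map_weilSum_traceChar {p : ℕ} [NeZero p] {K : Type*} [Field K] [Fintype K]
    [Algebra (ZMod p) K] {L : Type*} [CommRing L] {ζ : L} {F : Type*} [FunLike F L L]
    [RingHomClass F L L] {σ : F} {a : ZMod p} (hσ : σ ζ = ζ ^ a.val) (hζ : ζ ^ p = 1) {s : ℕ}
    {b : K} (hb : b ≠ 0) (hab : algebraMap (ZMod p) K a * b ^ s = 1) (u : K) :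
    σ (weilSum (traceChar K hζ) s u) =
      weilSum (traceChar K hζ) s (algebraMap (ZMod p) K a * b * u) := by
  rw [← weilSum_mulShift _ hb hab, weilSum, map_sum]
  simp_rw [map_traceChar hσ]
  rfl

theorem odd_of_coprime_of_even {s q : ℕ} (h : s.Coprime q) (hq : Even q) : Odd s :=
  Nat.not_even_iff_odd.mp fun hs =>
    Nat.not_coprime_of_dvd_of_dvd one_lt_two hs.two_dvd hq.two_dvd h

theorem mul_pow_eq_one_of_pow_eq_inv {G : Type*} [CommGroup G] {s k : ℕ}
    (hs : Function.Injective fun x : G => x ^ s) {g b : G} (hb : b ^ s = g⁻¹)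
    (hk : g ^ (k * s) = g ^ k) : (g * b) ^ k = 1 := by
  refine hs ?_
  simp only [one_pow, mul_pow, ← pow_mul, mul_comm k s, pow_mul b, hb, inv_pow]
  rw [mul_comm s k, hk, mul_inv_cancel]

theorem mul_pow_eq_one_of_odd {G : Type*} [CommGroup G] {s k : ℕ}
    (hs : Function.Injective fun x : G => x ^ s) (hodd : Odd s) {g b : G} (hb : b ^ s = g⁻¹)
    (hg : g ^ (2 * k) = 1) : (g * b) ^ k = 1 := by
  obtain ⟨m, rfl⟩ := hodd
  refine mul_pow_eq_one_of_pow_eq_inv hs hb ?_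
  rw [show k * (2 * m + 1) = k + 2 * k * m by ring, pow_add, pow_mul, hg, one_pow, mul_one]

theorem pow_eq_two_of_dvd {p n : ℕ} (hp : p.Prime) (hn : 0 < n) (hdvd : p ^ n - 1 ∣ p - 1)
    (hdvd_odd : Odd p → p ^ n - 1 ∣ (p - 1) / 2) : p ^ n = 2 := by
  have hle : p ≤ p ^ n := Nat.le_self_pow hn.ne' p
  rcases hp.eq_two_or_odd' with rfl | hodd
  · have := Nat.le_of_dvd one_pos hdvd
    omega
  · have := hp.two_le
    have := Nat.odd_iff.mp hodd
    have := Nat.le_of_dvd (by omega) (hdvd_odd hodd)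
    omega

section Cyclotomic

variable {p : ℕ} [Fact p.Prime] {L : Type*} [Field L] [Algebra ℚ L]
  [IsCyclotomicExtension {p} ℚ L] {ζ : L}

theorem exists_pow_eq_of_apply_eq_pow (hζ : IsPrimitiveRoot ζ p) {γ : (ZMod p)ˣ}
    (hγ : orderOf γ = p - 1) {σ : L ≃ₐ[ℚ] L} (hσ : σ ζ = ζ ^ (γ : ZMod p).val)
    (τ : L ≃ₐ[ℚ] L) : ∃ j : ℕ, σ ^ j = τ := by
  have hσγ : hζ.autToPow ℚ σ = γ := by
    refine Units.ext (ZMod.val_injective _ (hζ.pow_inj (ZMod.val_lt _) (ZMod.val_lt _) ?_))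
    rw [IsPrimitiveRoot.autToPow_spec ℚ hζ σ, hσ]
  have hγ_top : Subgroup.zpowers γ = ⊤ := Subgroup.eq_top_of_card_eq _ <| by
    rw [Nat.card_zpowers, hγ, Nat.card_eq_fintype_card, ZMod.card_units]
  obtain ⟨j, hj⟩ : hζ.autToPow ℚ τ ∈ Submonoid.powers γ := by
    rw [mem_powers_iff_mem_zpowers, hγ_top]
    exact Subgroup.mem_top _
  exact ⟨j, hζ.autToPow_injective ℚ (by rw [map_pow, hσγ]; exact hj)⟩

theorem mem_range_algebraMap_of_apply_eq_self (hζ : IsPrimitiveRoot ζ p) {γ : (ZMod p)ˣ}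
    (hγ : orderOf γ = p - 1) {σ : L ≃ₐ[ℚ] L} (hσ : σ ζ = ζ ^ (γ : ZMod p).val) {x : L}
    (hx : σ x = x) : x ∈ Set.range (algebraMap ℚ L) := by
  have := IsCyclotomicExtension.isGalois {p} ℚ L
  have := IsCyclotomicExtension.finiteDimensional {p} ℚ L
  refine (IsGalois.mem_range_algebraMap_iff_fixed x).2 fun τ => ?_
  obtain ⟨j, rfl⟩ := exists_pow_eq_of_apply_eq_pow hζ hγ hσ τ
  rw [AlgEquiv.coe_pow]
  exact Function.iterate_fixed hx j

end Cyclotomic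

theorem exists_intCast_eq_of_isIntegral {L : Type*} [Field L] [Algebra ℚ L] {x : L}
    (hx : x ∈ Set.range (algebraMap ℚ L)) (hint : IsIntegral ℤ x) : ∃ t : ℤ, (t : L) = x := by
  obtain ⟨r, rfl⟩ := hx
  obtain ⟨t, rfl⟩ := IsIntegrallyClosed.isIntegral_iff.mp
    ((isIntegral_algebraMap_iff (algebraMap ℚ L).injective).mp hint)
  exact ⟨t, by simp⟩

section OrbitSum

variable {R A G : Type*} [CommSemiring R] [Ring A] [Algebra R A] [Group G]
  {σ : A ≃ₐ[R] A} {f : G → A} {c : G}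

theorem pow_apply_eq_of_apply_eq (hσ : ∀ u, σ (f u) = f (c * u)) (j : ℕ) (u : G) :
    (σ ^ j) (f u) = f (c ^ j * u) := by
  induction j generalizing u with
  | zero => simp
  | succ j ih => rw [pow_succ, AlgEquiv.mul_apply, hσ, ih, ← mul_assoc, ← pow_succ]

theorem apply_sum_range_pow (hσ : ∀ u, σ (f u) = f (c * u)) {e : ℕ} (he : c ^ e = 1) :
    σ (∑ j ∈ range e, f (c ^ j)) = ∑ j ∈ range e, f (c ^ j) := by
  have hshift := (sum_range_succ' (fun j => f (c ^ j)) e).symm.trans (sum_range_succ _ e)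
  rw [he, ← pow_zero c] at hshift
  simp_rw [map_sum, hσ, ← pow_succ']
  exact add_right_cancel hshift

theorem card_nsmul_sum_range_pow [Fintype G] (hσ : ∀ u, σ (f u) = f (c * u)) {e : ℕ}
    (he : c ^ e = 1) (htrans : ∀ v, ∃ j : ℕ, (σ ^ j) (f 1) = f v) :
    Fintype.card G • ∑ j ∈ range e, f (c ^ j) = e • ∑ u, f u := by
  have horbit (v : G) : ∑ j ∈ range e, f (c ^ j * v) = ∑ j ∈ range e, f (c ^ j) := by
    obtain ⟨i, hi⟩ := htrans v
    calc ∑ j ∈ range e, f (c ^ j * v) = ∑ j ∈ range e, (σ ^ j) ((σ ^ i) (f 1)) := by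
          simp_rw [hi, pow_apply_eq_of_apply_eq hσ]
      _ = (σ ^ i) (∑ j ∈ range e, (σ ^ j) (f 1)) := by
          simp_rw [map_sum, ← AlgEquiv.mul_apply, ← pow_add, add_comm]
      _ = ∑ j ∈ range e, f (c ^ j) := by
          simp_rw [pow_apply_eq_of_apply_eq hσ, mul_one, AlgEquiv.coe_pow]
          exact Function.iterate_fixed (apply_sum_range_pow hσ he) i
  calc Fintype.card G • ∑ j ∈ range e, f (c ^ j)
      = ∑ v, ∑ j ∈ range e, f (c ^ j * v) := by simp [horbit]
    _ = ∑ j ∈ range e, ∑ v, f (c ^ j * v) := sum_comm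
    _ = e • ∑ u, f u := by
      simp [fun j => Fintype.sum_equiv (Equiv.mulLeft (c ^ j)) (f <| c ^ j * ·) f fun _ => rfl]

end OrbitSum

theorem card_sub_one_dvd_of_pow_eq_one {p : ℕ} [Fact p.Prime] {K : Type*} [Field K]
    [Fintype K] {L : Type*} [Field L] [Algebra ℚ L] [IsCyclotomicExtension {p} ℚ L] {ζ : L}
    (hζ : IsPrimitiveRoot ζ p) {γ : (ZMod p)ˣ} (hγ : orderOf γ = p - 1) {σ : L ≃ₐ[ℚ] L}
    (hσ : σ ζ = ζ ^ (γ : ZMod p).val) {ψ : AddChar K L} (hψ : ψ ≠ 1)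
    (hint : ∀ x, IsIntegral ℤ (ψ x)) {s : ℕ} (hs : s ≠ 0)
    (hbij : Function.Bijective fun x : K => x ^ s) {c : Kˣ}
    (hc : ∀ u : Kˣ, σ (weilSum ψ s u) = weilSum ψ s (c * u : Kˣ))
    (htrans : ∀ v : Kˣ, ∃ j : ℕ, (σ ^ j) (weilSum ψ s 1) = weilSum ψ s v) {e : ℕ}
    (he : c ^ e = 1) : Fintype.card K - 1 ∣ e := by
  classical
  obtain ⟨t, ht⟩ := exists_intCast_eq_of_isIntegral
    (mem_range_algebraMap_of_apply_eq_self hζ hγ hσ (apply_sum_range_pow hc he))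
    (IsIntegral.sum _ fun _ _ => IsIntegral.sum _ fun _ _ => hint _)
  have hsum := card_nsmul_sum_range_pow hc he htrans
  rw [← ht, sum_units_weilSum hψ hs hbij, nsmul_eq_mul, nsmul_eq_mul] at hsum
  have : CharZero L := Algebra.charZero_of_charZero ℚ L
  have hsum_int : (Fintype.card Kˣ : ℤ) * t = e * Fintype.card K :=
    Int.cast_injective (α := L) (by push_cast; exact hsum)
  have hdvd : Fintype.card Kˣ ∣ e * Fintype.card K :=
    Int.natCast_dvd_natCast.mp (by push_cast; exact Dvd.intro t hsum_int)
  rw [Fintype.card_units] at hdvd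
  have hcop : (Fintype.card K - 1).Coprime (Fintype.card K) :=
    (Nat.coprime_self_sub_left Fintype.card_pos).mpr (Nat.coprime_one_left _)
  exact hcop.dvd_of_dvd_mul_right hdvd

theorem stmt_18_general (p n s : ℕ) (hp : p.Prime) (hn : 0 < n)
    (K : Type*) [Field K] [Fintype K] [Algebra (ZMod p) K]
    (hcard : Fintype.card K = p ^ n)
    (hs : 0 < s) (hgcd : Nat.Coprime s (p ^ n - 1))
    (L : Type*) [Field L] [Algebra ℚ L]
    [IsCyclotomicExtension ({p} : Set ℕ) ℚ L]
    (ζ : L) (hζ : IsPrimitiveRoot ζ p)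
    (ψ : K → L) (hψ : ∀ x, ψ x = ζ ^ (Algebra.trace (ZMod p) K x).val)
    (W : K → L) (hW : ∀ u, W u = ∑ x : K, ψ (x ^ s - u * x))
    (γ : (ZMod p)ˣ) (hγ : orderOf γ = p - 1)
    (σ : L ≃ₐ[ℚ] L) (hσ : σ ζ = ζ ^ ((γ : ZMod p)).val) :
    (∀ A B : L, (∃ u : Kˣ, W (u : K) = A) → (∃ u : Kˣ, W (u : K) = B) →
        ∃ j : ℕ, (σ ^ j) A = B)
      ↔ Fintype.card K = 2 := by
  classical
  have : Fact p.Prime := ⟨hp⟩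
  have hcop : (Nat.card Kˣ).Coprime s := by
    rw [Nat.card_eq_fintype_card, Fintype.card_units, hcard]
    exact hgcd.symm
  obtain rfl : ψ = traceChar K hζ.pow_eq_one := funext hψ
  obtain rfl : W = weilSum (traceChar K hζ.pow_eq_one) s := funext hW
  set W := weilSum (traceChar K hζ.pow_eq_one) s
  refine ⟨fun hcyc => ?_, fun h2 A B ⟨u, hu⟩ ⟨v, hv⟩ => ?_⟩
  · set g : Kˣ := Units.map (algebraMap (ZMod p) K : ZMod p →* K) γ
    obtain ⟨b, hb : b ^ s = g⁻¹⟩ := hcop.pow_left_bijective.surjective g⁻¹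
    have hgb : (g : K) * (b : K) ^ s = 1 := by
      simpa using congrArg Units.val (show g * b ^ s = 1 by rw [hb, mul_inv_cancel])
    have hσW (u : Kˣ) : σ (W u) = W (g * b * u : Kˣ) :=
      map_weilSum_traceChar hσ hζ.pow_eq_one b.ne_zero hgb u
    have hdvd (e : ℕ) (he : (g * b) ^ e = 1) : Fintype.card K - 1 ∣ e :=
      card_sub_one_dvd_of_pow_eq_one hζ hγ hσ (traceChar_ne_one hζ) (isIntegral_traceChar _)
        hs.ne' (bijective_pow_of_coprime hs.ne' hcop) hσW
        (fun v => hcyc _ _ ⟨1, rfl⟩ ⟨v, rfl⟩) he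
    have hg : g ^ (p - 1) = 1 := by rw [← map_pow, ← hγ, pow_orderOf_eq_one, map_one]
    have hinj := hcop.pow_left_bijective.injective
    rw [hcard] at hdvd ⊢
    refine pow_eq_two_of_dvd hp hn
      (hdvd _ (mul_pow_eq_one_of_pow_eq_inv hinj hb (by rw [pow_mul, hg, one_pow]))) fun hodd => ?_
    have hs_odd : Odd s := odd_of_coprime_of_even hgcd (Nat.Odd.sub_odd hodd.pow odd_one)
    refine hdvd _ (mul_pow_eq_one_of_odd hinj hs_odd hb ?_)
    rwa [Nat.two_mul_div_two_of_even (Nat.Odd.sub_odd hodd odd_one)]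
  · have : Subsingleton Kˣ :=
      Fintype.card_le_one_iff_subsingleton.mp (by rw [Fintype.card_units, h2])
    exact ⟨0, by rw [← hu, ← hv, Subsingleton.elim u v]; rfl⟩

/-- The restriction `τ` of the Galois generator `σ` to the Weil value set
`{W_u : u ∈ K^×}` is a single cycle if and only if `K = F₂`. -/
theorem stmt_18 (p n s : ℕ) (hp : p.Prime) (hn : 0 < n)
    (K : Type*) [Field K] [Fintype K] [DecidableEq K] [CharP K p] [Algebra (ZMod p) K]
    (hcard : Fintype.card K = p ^ n)
    (hs : 0 < s) (hgcd : Nat.Coprime s (p ^ n - 1))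
    (L : Type*) [Field L] [Algebra ℚ L]
    [IsCyclotomicExtension ({p} : Set ℕ) ℚ L]
    (ζ : L) (hζ : IsPrimitiveRoot ζ p)
    (ψ : K → L) (hψ : ∀ x, ψ x = ζ ^ (Algebra.trace (ZMod p) K x).val)
    (W : K → L) (hW : ∀ u, W u = ∑ x : K, ψ (x ^ s - u * x))
    (γ : (ZMod p)ˣ) (hγ : orderOf γ = p - 1)
    (σ : L ≃ₐ[ℚ] L) (hσ : σ ζ = ζ ^ ((γ : ZMod p)).val) :
    (∀ A B : L, (∃ u : Kˣ, W (u : K) = A) → (∃ u : Kˣ, W (u : K) = B) →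
        ∃ j : ℕ, (σ ^ j) A = B)
      ↔ Fintype.card K = 2 :=
  stmt_18_general p n s hp hn K hcard hs hgcd L ζ hζ ψ hψ W hW γ hγ σ hσ
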